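/- arXiv:2111.10652 — 2 statements merged into one kernel-verified Lean document; each statement's English description precedes it below -/
import Mathlib

section
/- Let d ≥ 1 and α ∈ (0, d). There is a constant C (depending only on d and α) such that for all t ∈ (0, 1], the sum over nonzero lattice points n ∈ ℤ^d of e^(−4π²|n|²t) · |n|^(−α) is at most C · t^(−(d−α)/2). -/
/-- Squared Euclidean norm of a lattice point in `ℤ^d`. -/
noncomputable def znormSq {d : ℕ} (n : Fin d → ℤ) : ℝ := ∑ i, ((n i : ℝ)) ^ 2

/-- Euclidean norm of a lattice point in `ℤ^d`. -/
noncomputable def znorm {d : ℕ} (n : Fin d → ℤ) : ℝ := Real.sqrt (znormSq n)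

namespace HeatAux

open Finset
open scoped ENNReal NNReal

variable {d : ℕ}

/-- Sup norm (as a natural number) of a lattice point. -/
def supN (n : Fin d → ℤ) : ℕ := Finset.univ.sup fun i => (n i).natAbs

lemma natAbs_le_supN (n : Fin d → ℤ) (i : Fin d) : (n i).natAbs ≤ supN n :=
  Finset.le_sup (f := fun i => (n i).natAbs) (Finset.mem_univ i)

lemma one_le_supN {n : Fin d → ℤ} (hn : n ≠ 0) : 1 ≤ supN n := by
  obtain ⟨i, hi⟩ : ∃ i, n i ≠ 0 := by
    by_contra h; push_neg at h; exact hn (funext h)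
  exact le_trans (Int.natAbs_pos.mpr hi) (natAbs_le_supN n i)

lemma znormSq_nonneg (n : Fin d → ℤ) : 0 ≤ znormSq n :=
  Finset.sum_nonneg fun i _ => sq_nonneg _

lemma sq_supN_le_znormSq (n : Fin d → ℤ) : ((supN n : ℝ)) ^ 2 ≤ znormSq n := by
  rcases (Finset.univ : Finset (Fin d)).eq_empty_or_nonempty with h | h
  · have : supN n = 0 := by simp [supN, h]
    simpa [this] using znormSq_nonneg n
  · obtain ⟨i, _, hi⟩ := Finset.exists_mem_eq_sup Finset.univ h fun i => (n i).natAbs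
    have h1 : ((supN n : ℝ)) ^ 2 = ((n i : ℝ)) ^ 2 := by
      rw [supN, hi]
      rw [show (((n i).natAbs : ℝ)) = |((n i : ℤ) : ℝ)| from by
        simp [Nat.cast_natAbs], sq_abs]
    rw [h1]
    exact Finset.single_le_sum (f := fun j => ((n j : ℝ)) ^ 2)
      (fun j _ => sq_nonneg _) (Finset.mem_univ i)

lemma supN_le_znorm (n : Fin d → ℤ) : (supN n : ℝ) ≤ znorm n := by
  have h := sq_supN_le_znormSq n
  have h2 : (supN n : ℝ) = Real.sqrt (((supN n : ℝ)) ^ 2) :=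
    (Real.sqrt_sq (by positivity)).symm
  rw [h2, znorm]
  exact Real.sqrt_le_sqrt h

/-- The box of side `2m+1`. -/
noncomputable def box (d m : ℕ) : Finset (Fin d → ℤ) :=
  Fintype.piFinset fun _ => Finset.Icc (-(m : ℤ)) (m : ℤ)

lemma mem_box_iff {m : ℕ} {n : Fin d → ℤ} :
    n ∈ box d m ↔ ∀ i, (n i).natAbs ≤ m := by
  simp only [box, Fintype.mem_piFinset, Finset.mem_Icc]
  constructor
  · intro h i; have := h i; omega
  · intro h i; have := h i; omega

lemma mem_box_iff_supN {m : ℕ} {n : Fin d → ℤ} :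
    n ∈ box d m ↔ supN n ≤ m := by
  rw [mem_box_iff, supN, Finset.sup_le_iff]
  simp

lemma card_box (d m : ℕ) : (box d m).card = (2 * m + 1) ^ d := by
  rw [box, Fintype.card_piFinset]
  have h : (Finset.Icc (-(m : ℤ)) (m : ℤ)).card = 2 * m + 1 := by
    rw [Int.card_Icc]; omega
  simp only [h, Finset.prod_const, Finset.card_univ, Fintype.card_fin]

lemma nat_pow_diff (a : ℕ) : ∀ d : ℕ, (a + 2) ^ d ≤ a ^ d + 2 * d * (a + 2) ^ (d - 1)
  | 0 => by simp
  | 1 => by norm_num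
  | (k + 2) => by
    have ih := nat_pow_diff a (k + 1)
    have step : (a + 2) ^ (k + 2) = (a + 2) * (a + 2) ^ (k + 1) := by ring
    have h1 : (a + 2) * (a + 2) ^ (k + 1) ≤ (a + 2) * (a ^ (k + 1) + 2 * (k + 1) * (a + 2) ^ k) :=
      Nat.mul_le_mul_left _ (by simpa using ih)
    have h2 : (a + 2) * (a ^ (k + 1) + 2 * (k + 1) * (a + 2) ^ k)
        = a * a ^ (k + 1) + 2 * a ^ (k + 1) + 2 * (k + 1) * ((a + 2) * (a + 2) ^ k) := by ring
    have h3 : a * a ^ (k + 1) = a ^ (k + 2) := by ring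
    have h4 : (a + 2) * (a + 2) ^ k = (a + 2) ^ (k + 1) := by ring
    have h5 : 2 * a ^ (k + 1) ≤ 2 * (a + 2) ^ (k + 1) :=
      Nat.mul_le_mul_left _ (Nat.pow_le_pow_left (by omega) _)
    calc (a + 2) ^ (k + 2) ≤ a * a ^ (k + 1) + 2 * a ^ (k + 1) + 2 * (k + 1) * ((a + 2) * (a + 2) ^ k) := by
          rw [step]; rw [h2] at h1; exact h1
      _ ≤ a ^ (k + 2) + 2 * (a + 2) ^ (k + 1) + 2 * (k + 1) * (a + 2) ^ (k + 1) := by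
          rw [h3, h4]; omega
      _ = a ^ (k + 2) + 2 * (k + 2) * (a + 2) ^ (k + 2 - 1) := by
          have he : k + 2 - 1 = k + 1 := rfl
          rw [he]; ring

lemma shell_card_le (d m : ℕ) (hm : 1 ≤ m) :
    ((box d m).filter (fun n => supN n = m)).card ≤ 2 * d * 3 ^ (d - 1) * m ^ (d - 1) := by
  have hsub : (box d m).filter (fun n => supN n = m) ⊆ box d m \ box d (m - 1) := by
    intro n hn
    rw [Finset.mem_filter] at hn
    rw [Finset.mem_sdiff]
    refine ⟨hn.1, ?_⟩
    rw [mem_box_iff_supN]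
    omega
  have hss : box d (m - 1) ⊆ box d m := by
    intro n hn; rw [mem_box_iff_supN] at hn ⊢; omega
  have hcard : ((box d m).filter (fun n => supN n = m)).card
      ≤ (2 * m + 1) ^ d - (2 * (m - 1) + 1) ^ d := by
    calc ((box d m).filter (fun n => supN n = m)).card
        ≤ (box d m \ box d (m - 1)).card := Finset.card_le_card hsub
      _ = (box d m).card - (box d (m - 1)).card := Finset.card_sdiff_of_subset hss
      _ = (2 * m + 1) ^ d - (2 * (m - 1) + 1) ^ d := by rw [card_box, card_box]
  refine hcard.trans ?_
  have ha : 2 * m + 1 = (2 * (m - 1) + 1) + 2 := by omega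
  have := nat_pow_diff (2 * (m - 1) + 1) d
  rw [← ha] at this
  have h3 : (2 * m + 1) ^ (d - 1) ≤ (3 * m) ^ (d - 1) :=
    Nat.pow_le_pow_left (by omega) _
  calc (2 * m + 1) ^ d - (2 * (m - 1) + 1) ^ d ≤ 2 * d * (2 * m + 1) ^ (d - 1) := by omega
    _ ≤ 2 * d * (3 * m) ^ (d - 1) := Nat.mul_le_mul_left _ h3
    _ = 2 * d * 3 ^ (d - 1) * m ^ (d - 1) := by rw [Nat.mul_pow]; ring

lemma tsum_indicator_shell (d m : ℕ) (hm : 1 ≤ m) :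
    (∑' n : Fin d → ℤ, (if supN n = m then (1 : ℝ≥0∞) else 0))
      ≤ ((2 * d * 3 ^ (d - 1) * m ^ (d - 1) : ℕ) : ℝ≥0∞) := by
  rw [tsum_eq_sum (s := (box d m).filter (fun n => supN n = m))
    (by
      intro n hn
      rw [if_neg]
      intro hs
      exact hn (Finset.mem_filter.mpr ⟨mem_box_iff_supN.mpr hs.le, hs⟩))]
  calc ∑ n ∈ (box d m).filter (fun n => supN n = m), (if supN n = m then (1 : ℝ≥0∞) else 0)
      ≤ ∑ _n ∈ (box d m).filter (fun n => supN n = m), (1 : ℝ≥0∞) :=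
        Finset.sum_le_sum (fun n _ => by split <;> simp)
    _ = (((box d m).filter (fun n => supN n = m)).card : ℝ≥0∞) := by
        rw [Finset.sum_const, nsmul_eq_mul, mul_one]
    _ ≤ _ := by exact_mod_cast Nat.cast_le.mpr (shell_card_le d m hm)

/-- Bernoulli-type bound: for `0 < P ≤ 1` and real `x ≥ 1`,
`(x-1)^P ≤ x^P - P * x^(P-1)`. -/
lemma bernoulli_step {P : ℝ} (hP0 : 0 < P) (hP1 : P ≤ 1) {x : ℝ} (hx : 1 ≤ x) :
    (x - 1) ^ P ≤ x ^ P - P * x ^ (P - 1) := by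
  have hx0 : (0 : ℝ) < x := lt_of_lt_of_le one_pos hx
  have key : (1 + (-1 / x)) ^ P ≤ 1 + P * (-1 / x) := by
    refine rpow_one_add_le_one_add_mul_self ?_ hP0.le hP1
    rw [neg_div, neg_le, neg_neg]
    rw [div_le_one hx0]
    linarith
  have hfac : x - 1 = x * (1 + (-1 / x)) := by field_simp; ring
  have h1x : (0 : ℝ) ≤ 1 + (-1 / x) := by
    rw [neg_div]
    have : 1 / x ≤ 1 := by rw [div_le_one hx0]; linarith
    linarith
  calc (x - 1) ^ P = x ^ P * (1 + (-1 / x)) ^ P := by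
        rw [hfac, Real.mul_rpow hx0.le h1x]
    _ ≤ x ^ P * (1 + P * (-1 / x)) := by
        exact mul_le_mul_of_nonneg_left key (Real.rpow_nonneg hx0.le _)
    _ = x ^ P - P * (x ^ P / x) := by ring
    _ = x ^ P - P * x ^ (P - 1) := by
        rw [show x ^ (P - 1) = x ^ P / x by rw [Real.rpow_sub hx0, Real.rpow_one]]

/-- Partial sums of `m^β` for `β > -1`. -/
lemma partial_sum_rpow {β : ℝ} (hβ : -1 < β) (K : ℕ) :
    ∑ m ∈ Finset.Icc 1 K, ((m : ℝ)) ^ β ≤ (1 + 1 / (β + 1)) * (K : ℝ) ^ (β + 1) := by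
  have hP : 0 < β + 1 := by linarith
  rcases Nat.eq_zero_or_pos K with hK | hK
  · subst hK
    simp [Real.zero_rpow (ne_of_gt hP)]
  rcases le_or_gt 0 β with hβ0 | hβ0
  · -- β ≥ 0 : each term ≤ K^β
    have hterm : ∀ m ∈ Finset.Icc 1 K, ((m : ℝ)) ^ β ≤ (K : ℝ) ^ β := by
      intro m hm
      rw [Finset.mem_Icc] at hm
      exact Real.rpow_le_rpow (by positivity) (by exact_mod_cast hm.2) hβ0
    calc ∑ m ∈ Finset.Icc 1 K, ((m : ℝ)) ^ β ≤ ∑ _m ∈ Finset.Icc 1 K, ((K : ℝ)) ^ β :=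
          Finset.sum_le_sum hterm
      _ = (K : ℝ) * (K : ℝ) ^ β := by
          rw [Finset.sum_const, Nat.card_Icc]
          simp [nsmul_eq_mul]
      _ = (K : ℝ) ^ (β + 1) := by
          rw [Real.rpow_add (by exact_mod_cast hK : (0:ℝ) < (K:ℝ)), Real.rpow_one]
          ring
      _ ≤ (1 + 1 / (β + 1)) * (K : ℝ) ^ (β + 1) := by
          nlinarith [Real.rpow_nonneg (show (0:ℝ) ≤ K by positivity) (β + 1),
            one_div_pos.mpr hP]
  · -- -1 < β < 0 : telescoping with Bernoulli
    have hP1 : β + 1 ≤ 1 := by linarith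
    have key : ∀ m : ℕ, 1 ≤ m →
        ((m : ℝ)) ^ β ≤ (((m : ℝ)) ^ (β + 1) - (((m - 1 : ℕ) : ℝ)) ^ (β + 1)) / (β + 1) := by
      intro m hm
      have hx : (1 : ℝ) ≤ (m : ℝ) := by exact_mod_cast hm
      have hcast : (((m - 1 : ℕ)) : ℝ) = (m : ℝ) - 1 := by
        push_cast [Nat.cast_sub hm]; ring
      rw [hcast, le_div_iff₀ hP]
      have := bernoulli_step hP hP1 hx
      have hexp : β + 1 - 1 = β := by ring
      rw [hexp] at this
      linarith
    have hsum : ∑ m ∈ Finset.Icc 1 K, ((m : ℝ)) ^ β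
        ≤ ∑ m ∈ Finset.Icc 1 K, ((((m : ℝ)) ^ (β + 1) - (((m - 1 : ℕ) : ℝ)) ^ (β + 1)) / (β + 1)) := by
      refine Finset.sum_le_sum ?_
      intro m hm
      rw [Finset.mem_Icc] at hm
      exact key m hm.1
    refine hsum.trans ?_
    have htel : ∑ m ∈ Finset.Icc 1 K, ((((m : ℝ)) ^ (β + 1) - (((m - 1 : ℕ) : ℝ)) ^ (β + 1)))
        = (K : ℝ) ^ (β + 1) - ((0 : ℕ) : ℝ) ^ (β + 1) := by
      have hIcc : Finset.Icc 1 K = Finset.Ico 1 (K + 1) := by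
        rw [Finset.Ico_add_one_right_eq_Icc]
      rw [hIcc, Finset.sum_Ico_eq_sum_range]
      simp only [Nat.add_sub_cancel, Nat.add_sub_cancel_left, Nat.add_comm 1]
      exact Finset.sum_range_sub (fun j : ℕ => ((j : ℝ)) ^ (β + 1)) K
    rw [← Finset.sum_div, htel]
    have h0 : ((0 : ℕ) : ℝ) ^ (β + 1) = 0 := by
      simp [Real.zero_rpow (ne_of_gt hP)]
    rw [h0, sub_zero]
    rw [div_eq_mul_inv, mul_comm]
    have : (β + 1)⁻¹ ≤ 1 + 1 / (β + 1) := by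
      rw [one_div]
      nlinarith [inv_pos.mpr hP]
    exact mul_le_mul_of_nonneg_right this (Real.rpow_nonneg (by positivity) _)

lemma rpow_le_D_mul_exp_half {β : ℝ} (x : ℝ) (hx : 1 ≤ x) :
    x ^ β ≤ (max 1 (Real.exp (β * (Real.log (2 * β) - 1)))) * Real.exp (x / 2) := by
  set D := max 1 (Real.exp (β * (Real.log (2 * β) - 1))) with hD
  have hD1 : (1 : ℝ) ≤ D := le_max_left _ _
  have hx0 : (0 : ℝ) < x := lt_of_lt_of_le one_pos hx
  have hex : (1 : ℝ) ≤ Real.exp (x / 2) := Real.one_le_exp (by linarith)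
  rcases le_or_gt β 0 with hβ | hβ
  · have h1 : x ^ β ≤ 1 := Real.rpow_le_one_of_one_le_of_nonpos hx hβ
    nlinarith
  · have h2β : (0 : ℝ) < 2 * β := by linarith
    have hlog : Real.log x ≤ Real.log (2 * β) + (x / (2 * β) - 1) := by
      have h1 := Real.log_le_sub_one_of_pos (show (0 : ℝ) < x / (2 * β) by positivity)
      have hsplit : Real.log (x / (2 * β)) = Real.log x - Real.log (2 * β) :=
        Real.log_div (ne_of_gt hx0) (ne_of_gt h2β)
      linarith
    have hkey : β * Real.log x ≤ x / 2 + β * (Real.log (2 * β) - 1) := by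
      have h2 := mul_le_mul_of_nonneg_left hlog hβ.le
      have hxx : β * (x / (2 * β)) = x / 2 := by field_simp
      nlinarith
    calc x ^ β = Real.exp (Real.log x * β) := by rw [Real.rpow_def_of_pos hx0]
      _ ≤ Real.exp (x / 2 + β * (Real.log (2 * β) - 1)) := by
          apply Real.exp_le_exp.mpr; rw [mul_comm]; exact hkey
      _ = Real.exp (β * (Real.log (2 * β) - 1)) * Real.exp (x / 2) := by
          rw [← Real.exp_add]; ring_nf
      _ ≤ D * Real.exp (x / 2) :=
          mul_le_mul_of_nonneg_right (le_max_right _ _) (Real.exp_nonneg _)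

set_option maxHeartbeats 1000000 in
lemma oneD {β : ℝ} (hβ : -1 < β) {S₀ : ℝ} (hS₀ : 1 ≤ S₀) :
    ∃ C : ℝ, 0 < C ∧ ∀ s : ℝ, 0 < s → s ≤ S₀ →
      (∑' m : ℕ, ENNReal.ofReal (if 1 ≤ m then (m : ℝ) ^ β * Real.exp (-(s * (m : ℝ) ^ 2)) else 0))
        ≤ ENNReal.ofReal (C * s ^ (-(β + 1) / 2)) := by
  set D := max 1 (Real.exp (β * (Real.log (2 * β) - 1))) with hD
  have hD1 : (1 : ℝ) ≤ D := le_max_left _ _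
  have hD0 : (0 : ℝ) < D := lt_of_lt_of_le one_pos hD1
  have hP : (0 : ℝ) < β + 1 := by linarith
  set Cp : ℝ := 1 + 1 / (β + 1) with hCp
  have hCp0 : 0 < Cp := by positivity
  have hS0' : (0 : ℝ) < Real.sqrt S₀ := Real.sqrt_pos.mpr (by linarith)
  refine ⟨Cp + D * (2 + Real.sqrt S₀), by positivity, ?_⟩
  intro s hs hsS
  set u := Real.sqrt s with hu
  have hu0 : (0 : ℝ) < u := Real.sqrt_pos.mpr hs
  have husq : u ^ 2 = s := Real.sq_sqrt hs.le
  have huS : u ≤ Real.sqrt S₀ := Real.sqrt_le_sqrt hsS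
  set r := Real.exp (-(u / 2)) with hr
  have hr0 : (0 : ℝ) < r := Real.exp_pos _
  have hr1 : r < 1 := by
    rw [hr, Real.exp_lt_one_iff]; linarith
  set Y := s ^ (-(β + 1) / 2) with hY
  have hY0 : 0 ≤ Y := Real.rpow_nonneg hs.le _
  have hsqr : u⁻¹ = s ^ (-(1 / 2) : ℝ) := by
    rw [hu, Real.sqrt_eq_rpow, ← Real.rpow_neg hs.le]
  have hYinv : (u⁻¹) ^ (β + 1) = Y := by
    rw [hsqr, ← Real.rpow_mul hs.le, hY, show (-(1 / 2) : ℝ) * (β + 1) = -(β + 1) / 2 by ring]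
  -- per-term split
  have split : ∀ m : ℕ, (if 1 ≤ m then (m : ℝ) ^ β * Real.exp (-(s * (m : ℝ) ^ 2)) else 0)
      ≤ (if 1 ≤ m ∧ (m : ℝ) ^ 2 * s ≤ 1 then (m : ℝ) ^ β else 0)
        + D * u ^ (-β) * r ^ m := by
    intro m
    have hBnn : 0 ≤ D * u ^ (-β) * r ^ m := by positivity
    by_cases hm : 1 ≤ m
    · have hm0 : (0 : ℝ) < (m : ℝ) := by exact_mod_cast hm
      have hmβ : 0 ≤ (m : ℝ) ^ β := Real.rpow_nonneg hm0.le _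
      by_cases hq : (m : ℝ) ^ 2 * s ≤ 1
      · rw [if_pos hm, if_pos ⟨hm, hq⟩]
        have he1 : Real.exp (-(s * (m : ℝ) ^ 2)) ≤ 1 := by
          rw [Real.exp_le_one_iff]
          nlinarith
        nlinarith
      · rw [if_pos hm, if_neg (by tauto)]
        push_neg at hq
        have hum2 : (u * m) ^ 2 = (m : ℝ) ^ 2 * s := by
          rw [mul_pow, husq]; ring
        have hum : 1 ≤ u * m := by
          nlinarith [mul_nonneg hu0.le hm0.le]
        have hle : u * m ≤ s * (m : ℝ) ^ 2 := by nlinarith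
        have hexp1 : Real.exp (-(s * (m : ℝ) ^ 2)) ≤ Real.exp (-(u * m)) :=
          Real.exp_le_exp.mpr (by linarith)
        have hxb : (u * m) ^ β ≤ D * Real.exp (u * m / 2) := rpow_le_D_mul_exp_half _ hum
        have huβ : (0 : ℝ) < u ^ (-β) := Real.rpow_pos_of_pos hu0 _
        have hmb : (m : ℝ) ^ β = (u * m) ^ β * u ^ (-β) := by
          rw [Real.mul_rpow hu0.le hm0.le, mul_comm (u ^ β), mul_assoc,
            ← Real.rpow_add hu0, add_neg_cancel, Real.rpow_zero, mul_one]
        have hrm : r ^ m = Real.exp (-(u * m) / 2) := by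
          rw [hr, ← Real.exp_nat_mul]
          congr 1; ring
        have step1 : (m : ℝ) ^ β * Real.exp (-(s * (m : ℝ) ^ 2))
            ≤ ((u * m) ^ β * u ^ (-β)) * Real.exp (-(u * m)) := by
          rw [hmb]
          exact mul_le_mul_of_nonneg_left hexp1 (by rw [← hmb]; exact hmβ)
        have step2 : ((u * m) ^ β * u ^ (-β)) * Real.exp (-(u * m))
            ≤ (D * Real.exp (u * m / 2) * u ^ (-β)) * Real.exp (-(u * m)) := by
          have h := mul_le_mul_of_nonneg_right hxb huβ.le
          exact mul_le_mul_of_nonneg_right h (Real.exp_nonneg _)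
        have step3 : (D * Real.exp (u * m / 2) * u ^ (-β)) * Real.exp (-(u * m))
            = D * u ^ (-β) * r ^ m := by
          rw [hrm, show D * Real.exp (u * ↑m / 2) * u ^ (-β) * Real.exp (-(u * ↑m))
              = D * u ^ (-β) * (Real.exp (u * ↑m / 2) * Real.exp (-(u * ↑m))) from by ring,
            ← Real.exp_add]
          congr 2
          ring
        calc (m : ℝ) ^ β * Real.exp (-(s * (m : ℝ) ^ 2))
            ≤ ((u * m) ^ β * u ^ (-β)) * Real.exp (-(u * m)) := step1
          _ ≤ (D * Real.exp (u * m / 2) * u ^ (-β)) * Real.exp (-(u * m)) := step2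
          _ = D * u ^ (-β) * r ^ m := step3
          _ ≤ (0 : ℝ) + D * u ^ (-β) * r ^ m := le_of_eq (zero_add _).symm
    · rw [if_neg hm, if_neg (fun h => hm h.1)]
      rw [zero_add]
      exact hBnn
  -- sum the split
  have hsum1 : (∑' m : ℕ, ENNReal.ofReal (if 1 ≤ m then (m : ℝ) ^ β * Real.exp (-(s * (m : ℝ) ^ 2)) else 0))
      ≤ (∑' m : ℕ, ENNReal.ofReal (if 1 ≤ m ∧ (m : ℝ) ^ 2 * s ≤ 1 then (m : ℝ) ^ β else 0))
        + (∑' m : ℕ, ENNReal.ofReal (D * u ^ (-β) * r ^ m)) := by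
    rw [← ENNReal.tsum_add]
    refine ENNReal.tsum_le_tsum fun m => ?_
    exact le_trans (ENNReal.ofReal_le_ofReal (split m)) ENNReal.ofReal_add_le
  -- Part A
  set K : ℕ := Nat.floor u⁻¹ with hK
  have hpartA : (∑' m : ℕ, ENNReal.ofReal (if 1 ≤ m ∧ (m : ℝ) ^ 2 * s ≤ 1 then (m : ℝ) ^ β else 0))
      ≤ ENNReal.ofReal (Cp * Y) := by
    have hsupp : ∀ m ∉ Finset.Icc 1 K,
        ENNReal.ofReal (if 1 ≤ m ∧ (m : ℝ) ^ 2 * s ≤ 1 then (m : ℝ) ^ β else 0) = 0 := by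
      intro m hm
      rw [if_neg, ENNReal.ofReal_zero]
      rintro ⟨h1, h2⟩
      apply hm
      rw [Finset.mem_Icc]
      refine ⟨h1, Nat.le_floor ?_⟩
      have hm0 : (0 : ℝ) < (m : ℝ) := by exact_mod_cast h1
      rw [← mul_le_mul_iff_of_pos_right hu0, inv_mul_cancel₀ (ne_of_gt hu0)]
      nlinarith [husq, mul_pos hm0 hu0]
    rw [tsum_eq_sum hsupp]
    calc ∑ m ∈ Finset.Icc 1 K, ENNReal.ofReal (if 1 ≤ m ∧ (m : ℝ) ^ 2 * s ≤ 1 then (m : ℝ) ^ β else 0)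
        ≤ ∑ m ∈ Finset.Icc 1 K, ENNReal.ofReal ((m : ℝ) ^ β) := by
          refine Finset.sum_le_sum fun m hm => ENNReal.ofReal_le_ofReal ?_
          rw [Finset.mem_Icc] at hm
          have hm0 : (0 : ℝ) < (m : ℝ) := by exact_mod_cast hm.1
          split
          · exact le_refl _
          · exact Real.rpow_nonneg hm0.le _
      _ = ENNReal.ofReal (∑ m ∈ Finset.Icc 1 K, (m : ℝ) ^ β) := by
          rw [ENNReal.ofReal_sum_of_nonneg]
          intro m hm
          rw [Finset.mem_Icc] at hm
          have hm0 : (0 : ℝ) < (m : ℝ) := by exact_mod_cast hm.1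
          exact Real.rpow_nonneg hm0.le _
      _ ≤ ENNReal.ofReal (Cp * Y) := by
          apply ENNReal.ofReal_le_ofReal
          refine le_trans (partial_sum_rpow hβ K) ?_
          rw [← hYinv]
          refine mul_le_mul_of_nonneg_left ?_ hCp0.le
          refine Real.rpow_le_rpow (by positivity) ?_ hP.le
          exact Nat.floor_le (by positivity)
  -- Part B
  have hpartB : (∑' m : ℕ, ENNReal.ofReal (D * u ^ (-β) * r ^ m))
      ≤ ENNReal.ofReal (D * (2 + Real.sqrt S₀) * Y) := by
    have huβ : (0 : ℝ) < u ^ (-β) := Real.rpow_pos_of_pos hu0 _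
    have h1 : ∀ m : ℕ, ENNReal.ofReal (D * u ^ (-β) * r ^ m)
        = ENNReal.ofReal (D * u ^ (-β)) * (ENNReal.ofReal r) ^ m := by
      intro m
      rw [ENNReal.ofReal_mul (by positivity), ENNReal.ofReal_pow hr0.le]
    calc (∑' m : ℕ, ENNReal.ofReal (D * u ^ (-β) * r ^ m))
        = ENNReal.ofReal (D * u ^ (-β)) * ∑' m : ℕ, (ENNReal.ofReal r) ^ m := by
          simp_rw [h1]; rw [ENNReal.tsum_mul_left]
      _ = ENNReal.ofReal (D * u ^ (-β)) * (1 - ENNReal.ofReal r)⁻¹ := by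
          rw [ENNReal.tsum_geometric]
      _ = ENNReal.ofReal (D * u ^ (-β)) * ENNReal.ofReal ((1 - r)⁻¹) := by
          rw [← ENNReal.ofReal_one, ← ENNReal.ofReal_sub _ hr0.le,
            ENNReal.ofReal_inv_of_pos (by linarith)]
      _ = ENNReal.ofReal (D * u ^ (-β) * (1 - r)⁻¹) := by
          rw [← ENNReal.ofReal_mul (by positivity)]
      _ ≤ ENNReal.ofReal (D * (2 + Real.sqrt S₀) * Y) := by
          apply ENNReal.ofReal_le_ofReal
          have hgeo : (1 - r)⁻¹ ≤ (2 + Real.sqrt S₀) * u⁻¹ := by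
            have hlow : u / 2 / (1 + u / 2) ≤ 1 - r := by
              have hrle : Real.exp (-(u / 2)) ≤ (1 + u / 2)⁻¹ := by
                rw [Real.exp_neg]
                apply inv_anti₀ (by linarith)
                linarith [Real.add_one_le_exp (u / 2)]
              have heq : (1 + u / 2)⁻¹ = 1 - u / 2 / (1 + u / 2) := by
                field_simp
                ring
              rw [hr]
              linarith
            have hlow0 : (0 : ℝ) < u / 2 / (1 + u / 2) := by positivity
            calc (1 - r)⁻¹ ≤ (u / 2 / (1 + u / 2))⁻¹ := inv_anti₀ hlow0 hlow
              _ = (1 + u / 2) / (u / 2) := by rw [inv_div]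
              _ = 2 * u⁻¹ + 1 := by field_simp
              _ ≤ (2 + Real.sqrt S₀) * u⁻¹ := by
                  have h1u : 1 ≤ Real.sqrt S₀ * u⁻¹ := by
                    rw [← div_eq_mul_inv, le_div_iff₀ hu0]
                    linarith
                  nlinarith [inv_pos.mpr hu0]
          calc D * u ^ (-β) * (1 - r)⁻¹ ≤ D * u ^ (-β) * ((2 + Real.sqrt S₀) * u⁻¹) :=
                mul_le_mul_of_nonneg_left hgeo (by positivity)
            _ = D * (2 + Real.sqrt S₀) * (u ^ (-β) * u⁻¹) := by ring
            _ = D * (2 + Real.sqrt S₀) * Y := by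
                have huY : u ^ (-β) * u⁻¹ = Y := by
                  rw [← hYinv, ← Real.rpow_neg_one u, ← Real.rpow_add hu0,
                    ← Real.rpow_mul hu0.le]
                  congr 1; ring
                rw [huY]
  calc (∑' m : ℕ, ENNReal.ofReal (if 1 ≤ m then (m : ℝ) ^ β * Real.exp (-(s * (m : ℝ) ^ 2)) else 0))
      ≤ ENNReal.ofReal (Cp * Y) + ENNReal.ofReal (D * (2 + Real.sqrt S₀) * Y) :=
        hsum1.trans (add_le_add hpartA hpartB)
    _ = ENNReal.ofReal ((Cp + D * (2 + Real.sqrt S₀)) * Y) := by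
        rw [← ENNReal.ofReal_add (by positivity) (by positivity)]
        ring_nf


end HeatAux

open scoped ENNReal NNReal in
/-- For `d ≥ 1`, `α ∈ (0, d)`, there is `C = C(d, α)` such that for `t ∈ (0, 1]`,
`∑_{n ∈ ℤ^d, n ≠ 0} e^{-4π²|n|²t} |n|^{-α} ≤ C t^{-(d-α)/2}`. -/
theorem heat_greens_function_bound (d : ℕ) (hd : 1 ≤ d) (α : ℝ) (hα0 : 0 < α)
    (hαd : α < d) :
    ∃ C : ℝ, 0 < C ∧ ∀ t : ℝ, 0 < t → t ≤ 1 →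
      (∑' n : {n : Fin d → ℤ // n ≠ 0},
          Real.exp (-(4 * Real.pi ^ 2 * znormSq n.1 * t)) * znorm n.1 ^ (-α))
        ≤ C * t ^ (-((d : ℝ) - α) / 2) := by
  classical
  have hπ : (0 : ℝ) < Real.pi := Real.pi_pos
  set c : ℝ := 4 * Real.pi ^ 2 with hc
  have hc0 : (0 : ℝ) < c := by positivity
  have hc1 : (1 : ℝ) ≤ c := by nlinarith [Real.pi_gt_three]
  set β : ℝ := (d : ℝ) - 1 - α with hβdef
  have hβ : -1 < β := by
    rw [hβdef]; linarith
  have hβ1 : β + 1 = (d : ℝ) - α := by rw [hβdef]; ring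
  obtain ⟨C₁, hC₁0, hC₁⟩ := HeatAux.oneD hβ hc1
  set Kd : ℕ := 2 * d * 3 ^ (d - 1) with hKd
  have hKd0 : (0 : ℝ) < (Kd : ℝ) := by
    have : 0 < Kd := by positivity
    exact_mod_cast this
  set c2 : ℝ := c ^ (-((d : ℝ) - α) / 2) with hc2
  have hc20 : 0 < c2 := Real.rpow_pos_of_pos hc0 _
  refine ⟨(Kd : ℝ) * C₁ * c2, by positivity, ?_⟩
  intro t ht ht1
  set s : ℝ := c * t with hs
  have hs0 : 0 < s := by positivity
  have hsc : s ≤ c := by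
    rw [hs]; nlinarith
  set γ : ℝ := -((d : ℝ) - α) / 2 with hγ
  have hγeq : -(β + 1) / 2 = γ := by rw [hγ, hβ1]
  set F : ℕ → ℝ := fun m => Real.exp (-(s * (m : ℝ) ^ 2)) * (m : ℝ) ^ (-α) with hF
  have hF0 : ∀ m : ℕ, 0 ≤ F m := fun m =>
    mul_nonneg (Real.exp_nonneg _) (Real.rpow_nonneg (Nat.cast_nonneg m) _)
  set f : {n : Fin d → ℤ // n ≠ 0} → ℝ := fun n =>
    Real.exp (-(4 * Real.pi ^ 2 * znormSq n.1 * t)) * znorm n.1 ^ (-α) with hf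
  have hf0 : ∀ n, 0 ≤ f n := fun n =>
    mul_nonneg (Real.exp_nonneg _) (Real.rpow_nonneg (Real.sqrt_nonneg _) _)
  set H : ℕ → (Fin d → ℤ) → ℝ≥0∞ := fun m n =>
    if HeatAux.supN n = m ∧ 1 ≤ m then ENNReal.ofReal (F m) else 0 with hH
  -- Step A+B : pointwise bound by fiber-indexed double sum
  have stepAB : ∀ n : {n : Fin d → ℤ // n ≠ 0},
      ENNReal.ofReal (f n) ≤ ∑' m : ℕ, H m n.1 := by
    intro n
    have hm1 : 1 ≤ HeatAux.supN n.1 := HeatAux.one_le_supN n.2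
    have hm0 : (1 : ℝ) ≤ (HeatAux.supN n.1 : ℝ) := by exact_mod_cast hm1
    have hsingle : (∑' m : ℕ, H m n.1) = ENNReal.ofReal (F (HeatAux.supN n.1)) := by
      rw [tsum_eq_single (HeatAux.supN n.1) (fun m' hm' => by
        rw [hH]; exact if_neg (fun h => hm' h.1.symm))]
      rw [hH]; exact if_pos ⟨rfl, hm1⟩
    rw [hsingle]
    apply ENNReal.ofReal_le_ofReal
    have hq : ((HeatAux.supN n.1 : ℝ)) ^ 2 ≤ znormSq n.1 := HeatAux.sq_supN_le_znormSq n.1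
    have hexp : Real.exp (-(4 * Real.pi ^ 2 * znormSq n.1 * t))
        ≤ Real.exp (-(s * ((HeatAux.supN n.1 : ℝ)) ^ 2)) := by
      apply Real.exp_le_exp.mpr
      rw [hs, hc]
      nlinarith [mul_nonneg (mul_nonneg (show (0:ℝ) ≤ 4 * Real.pi ^ 2 by positivity) ht.le)
        (sub_nonneg.mpr hq)]
    have hrp : znorm n.1 ^ (-α) ≤ ((HeatAux.supN n.1 : ℝ)) ^ (-α) := by
      apply Real.rpow_le_rpow_of_nonpos (by linarith) (HeatAux.supN_le_znorm n.1)
      linarith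
    have h1 : 0 ≤ znorm n.1 ^ (-α) := Real.rpow_nonneg (Real.sqrt_nonneg _) _
    exact mul_le_mul hexp hrp h1 (Real.exp_nonneg _)
  -- Step C : pass to the full lattice, swap sums
  have stepC : (∑' n : {n : Fin d → ℤ // n ≠ 0}, ENNReal.ofReal (f n))
      ≤ ∑' m : ℕ, ∑' n : Fin d → ℤ, H m n := by
    calc (∑' n : {n : Fin d → ℤ // n ≠ 0}, ENNReal.ofReal (f n))
        ≤ ∑' n : {n : Fin d → ℤ // n ≠ 0}, ∑' m : ℕ, H m n.1 :=
          ENNReal.tsum_le_tsum stepAB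
      _ = ∑' n : {n : Fin d → ℤ | n ≠ 0}, (fun n : Fin d → ℤ => ∑' m : ℕ, H m n) n := rfl
      _ = ∑' n : Fin d → ℤ, Set.indicator {n : Fin d → ℤ | n ≠ 0}
            (fun n => ∑' m : ℕ, H m n) n :=
          tsum_subtype {n : Fin d → ℤ | n ≠ 0} (fun n => ∑' m : ℕ, H m n)
      _ ≤ ∑' n : Fin d → ℤ, ∑' m : ℕ, H m n :=
          ENNReal.tsum_le_tsum (fun n => Set.indicator_le_self _ _ n)
      _ = ∑' m : ℕ, ∑' n : Fin d → ℤ, H m n := ENNReal.tsum_comm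
  -- Step E : count the fibers
  have stepE : ∀ m : ℕ, (∑' n : Fin d → ℤ, H m n)
      ≤ ENNReal.ofReal ((Kd : ℝ))
          * ENNReal.ofReal (if 1 ≤ m then (m : ℝ) ^ β * Real.exp (-(s * (m : ℝ) ^ 2)) else 0) := by
    intro m
    by_cases hm : 1 ≤ m
    · have hmr : (1 : ℝ) ≤ (m : ℝ) := by exact_mod_cast hm
      have hpt : ∀ n : Fin d → ℤ, H m n
          = ENNReal.ofReal (F m) * (if HeatAux.supN n = m then 1 else 0) := by
        intro n
        rw [hH]
        by_cases h : HeatAux.supN n = m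
        · simp [h, hm]
        · simp [h]
      have hcount := HeatAux.tsum_indicator_shell d m hm
      calc (∑' n : Fin d → ℤ, H m n)
          = ENNReal.ofReal (F m) * ∑' n : Fin d → ℤ, (if HeatAux.supN n = m then (1 : ℝ≥0∞) else 0) := by
            simp_rw [hpt]; rw [ENNReal.tsum_mul_left]
        _ ≤ ENNReal.ofReal (F m) * ((2 * d * 3 ^ (d - 1) * m ^ (d - 1) : ℕ) : ℝ≥0∞) :=
            mul_le_mul_right hcount _
        _ = ENNReal.ofReal ((Kd : ℝ))
              * ENNReal.ofReal (if 1 ≤ m then (m : ℝ) ^ β * Real.exp (-(s * (m : ℝ) ^ 2)) else 0) := by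
            rw [if_pos hm, ← ENNReal.ofReal_natCast (2 * d * 3 ^ (d - 1) * m ^ (d - 1)),
              ← ENNReal.ofReal_mul (hF0 m), ← ENNReal.ofReal_mul (by positivity)]
            congr 1
            have hmpos : (0 : ℝ) < (m : ℝ) := by linarith
            have hrw : ((m : ℝ)) ^ β = ((m : ℝ)) ^ ((d - 1 : ℕ) : ℝ) * ((m : ℝ)) ^ (-α) := by
              rw [← Real.rpow_add hmpos]
              congr 1
              rw [hβdef]
              push_cast [Nat.cast_sub hd]
              ring
            rw [hrw, Real.rpow_natCast]
            push_cast [hKd]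
            ring
    · have hpt : ∀ n : Fin d → ℤ, H m n = 0 := by
        intro n; rw [hH]; exact if_neg (fun h => hm h.2)
      simp [hpt, hm]
  -- assemble
  have hmain : (∑' n : {n : Fin d → ℤ // n ≠ 0}, ENNReal.ofReal (f n))
      ≤ ENNReal.ofReal ((Kd : ℝ) * C₁ * c2 * t ^ γ) := by
    calc (∑' n : {n : Fin d → ℤ // n ≠ 0}, ENNReal.ofReal (f n))
        ≤ ∑' m : ℕ, ∑' n : Fin d → ℤ, H m n := stepC
      _ ≤ ∑' m : ℕ, ENNReal.ofReal ((Kd : ℝ))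
            * ENNReal.ofReal (if 1 ≤ m then (m : ℝ) ^ β * Real.exp (-(s * (m : ℝ) ^ 2)) else 0) :=
          ENNReal.tsum_le_tsum stepE
      _ = ENNReal.ofReal ((Kd : ℝ))
            * ∑' m : ℕ, ENNReal.ofReal (if 1 ≤ m then (m : ℝ) ^ β * Real.exp (-(s * (m : ℝ) ^ 2)) else 0) :=
          ENNReal.tsum_mul_left
      _ ≤ ENNReal.ofReal ((Kd : ℝ)) * ENNReal.ofReal (C₁ * s ^ (-(β + 1) / 2)) :=
          mul_le_mul_right (hC₁ s hs0 hsc) _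
      _ ≤ ENNReal.ofReal ((Kd : ℝ) * C₁ * c2 * t ^ γ) := by
          rw [← ENNReal.ofReal_mul hKd0.le]
          apply ENNReal.ofReal_le_ofReal
          have hsy : s ^ (-(β + 1) / 2) = c2 * t ^ γ := by
            rw [hγeq, hs, Real.mul_rpow hc0.le ht.le, hc2]
          rw [hsy]
          ring_nf
          exact le_refl _
  have h1 : (∑' n : {n : Fin d → ℤ // n ≠ 0}, f n)
      = (∑' n : {n : Fin d → ℤ // n ≠ 0}, ENNReal.ofReal (f n)).toReal := by
    rw [ENNReal.tsum_toReal_eq (fun n => ENNReal.ofReal_ne_top)]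
    congr 1
    funext n
    rw [ENNReal.toReal_ofReal (hf0 n)]
  have h2 := ENNReal.toReal_mono ENNReal.ofReal_ne_top hmain
  rw [ENNReal.toReal_ofReal (by positivity)] at h2
  calc (∑' n : {n : Fin d → ℤ // n ≠ 0},
          Real.exp (-(4 * Real.pi ^ 2 * znormSq n.1 * t)) * znorm n.1 ^ (-α))
      = (∑' n : {n : Fin d → ℤ // n ≠ 0}, ENNReal.ofReal (f n)).toReal := h1
    _ ≤ (Kd : ℝ) * C₁ * c2 * t ^ γ := h2
    _ = (Kd : ℝ) * C₁ * c2 * t ^ (-((d : ℝ) - α) / 2) := by rw [hγ]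
end

section
/- Let λ₁,…,λₙ be real numbers with Σᵢ λᵢ² = 1/2, and let Z₁,…,Zₙ be i.i.d. standard Gaussians. Then E[exp((1/2) Σᵢ λᵢ Zᵢ²)] ≤ exp((1/2) Σᵢ λᵢ + 3/2). -/
open MeasureTheory ProbabilityTheory Real
open scoped ENNReal NNReal

lemma gauss_smul (c : ℝ) :
    ∀ x : ℝ, (gaussianPDFReal 0 1 x).toNNReal • rexp (c * x ^ 2)
      = (√(2 * π))⁻¹ * rexp (-(1/2 - c) * x ^ 2) := by
  intro x
  have hnn := gaussianPDFReal_nonneg 0 1 x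
  rw [NNReal.smul_def, Real.coe_toNNReal _ hnn]
  simp only [gaussianPDFReal, NNReal.coe_one, mul_one, sub_zero, smul_eq_mul]
  rw [mul_assoc, ← Real.exp_add]
  ring_nf

lemma gauss_density :
    gaussianReal 0 1 = volume.withDensity
      (fun x => ((gaussianPDFReal 0 1 x).toNNReal : ℝ≥0∞)) := by
  rw [gaussianReal_of_var_ne_zero 0 one_ne_zero]
  rfl

lemma gauss_integrable {c : ℝ} (hc : c < 1/2) :
    Integrable (fun x => rexp (c * x ^ 2)) (gaussianReal 0 1) := by
  rw [gauss_density, integrable_withDensity_iff_integrable_smul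
    ((measurable_gaussianPDFReal 0 1).real_toNNReal)]
  simp only [gauss_smul]
  exact (integrable_exp_neg_mul_sq (by linarith)).const_mul _

lemma gauss_integral {c : ℝ} (hc : c < 1/2) :
    ∫ x, rexp (c * x ^ 2) ∂(gaussianReal 0 1) = √(1 - 2*c)⁻¹ := by
  rw [gauss_density, integral_withDensity_eq_integral_smul
    ((measurable_gaussianPDFReal 0 1).real_toNNReal)]
  simp only [gauss_smul]
  rw [integral_const_mul, integral_gaussian]
  rw [← Real.sqrt_inv, ← Real.sqrt_mul (by positivity)]
  congr 1
  have hπ : (0:ℝ) < π := pi_pos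
  have h1 : (1/2 - c) ≠ 0 := by linarith
  have h2 : (1 - 2*c) ≠ 0 := by linarith
  field_simp

lemma sqrt_inv_le_exp {l : ℝ} (hl : l ^ 2 ≤ 1/2) :
    √(1 - l)⁻¹ ≤ rexp (l/2 + 3 * l^2) := by
  have hl1 : l < 1 := by nlinarith [sq_nonneg (l - 1)]
  have hpos : (0:ℝ) < 1 - l := by linarith
  have hl2 : l ≤ 3/4 := by nlinarith [sq_nonneg (l - 3/4)]
  have key : 1 ≤ (1 - l) * rexp (l + 6 * l^2) := by
    have h1 : (l + 6 * l^2) + 1 ≤ rexp (l + 6 * l^2) := Real.add_one_le_exp _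
    have h2 : (1 - l) * ((l + 6 * l^2) + 1) ≤ (1 - l) * rexp (l + 6 * l^2) :=
      mul_le_mul_of_nonneg_left h1 hpos.le
    nlinarith [mul_nonneg (sq_nonneg l) (by linarith : (0:ℝ) ≤ 5 - 6 * l)]
  have h : (1 - l)⁻¹ ≤ rexp (l/2 + 3 * l^2) ^ 2 := by
    have hsq : rexp (l/2 + 3 * l^2) ^ 2 = rexp (l + 6 * l^2) := by
      rw [sq, ← Real.exp_add]; ring_nf
    rw [hsq, inv_le_iff_one_le_mul₀ hpos]
    linarith [key]
  calc √(1 - l)⁻¹ ≤ √(rexp (l/2 + 3 * l^2) ^ 2) := Real.sqrt_le_sqrt h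
    _ = rexp (l/2 + 3 * l^2) := Real.sqrt_sq (Real.exp_pos _).le

/-- If `Σᵢ λᵢ² = 1/2` and `Z₁,…,Zₙ` are i.i.d. standard Gaussians, then
`E[exp((1/2) Σᵢ λᵢ Zᵢ²)] ≤ exp((1/2) Σᵢ λᵢ + 3/2)`. -/
theorem exp_moment_gaussian_quadratic
    {Ω : Type*} [MeasureSpace Ω] [IsProbabilityMeasure (ℙ : Measure Ω)]
    (n : ℕ) (Z : Fin n → Ω → ℝ)
    (hZmeas : ∀ i, Measurable (Z i))
    (hZlaw : ∀ i, Measure.map (Z i) ℙ = gaussianReal 0 1)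
    (hZindep : iIndepFun Z ℙ)
    (lam : Fin n → ℝ) (hlam : ∑ i, lam i ^ 2 = 1 / 2) :
    (∫ ω, Real.exp ((1 / 2) * ∑ i, lam i * (Z i ω) ^ 2)) ≤
      Real.exp ((1 / 2) * ∑ i, lam i + 3 / 2) := by
  have hsq : ∀ i, lam i ^ 2 ≤ 1/2 := by
    intro i
    rw [← hlam]
    exact Finset.single_le_sum (fun j _ => sq_nonneg (lam j)) (Finset.mem_univ i)
  set X : Fin n → Ω → ℝ := fun i ω => lam i * (Z i ω) ^ 2 with hX
  have hXmeas : ∀ i, Measurable (X i) := fun i => ((hZmeas i).pow_const 2).const_mul _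
  have hXindep : iIndepFun X ℙ :=
    hZindep.comp (fun i x => lam i * x ^ 2)
      (fun i => (measurable_id.pow_const 2).const_mul _)
  have hmgf : ∀ i, mgf (X i) ℙ (1/2) = √(1 - lam i)⁻¹ := by
    intro i
    have hc : lam i / 2 < 1/2 := by nlinarith [sq_nonneg (lam i - 1), hsq i]
    have hform : ∀ x : ℝ, (1/2 : ℝ) * (lam i * x ^ 2) = (lam i / 2) * x ^ 2 :=
      fun x => by ring
    unfold mgf
    simp only [hX, hform]
    rw [show (∫ ω, rexp ((lam i / 2) * (Z i ω) ^ 2) ∂ℙ)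
        = ∫ x, rexp ((lam i / 2) * x ^ 2) ∂(Measure.map (Z i) ℙ) from
      (integral_map (hZmeas i).aemeasurable
        (((measurable_id.pow_const 2).const_mul _).exp.aestronglyMeasurable)).symm,
      hZlaw i, gauss_integral hc,
      show (1:ℝ) - 2 * (lam i / 2) = 1 - lam i from by ring]
  calc (∫ ω, rexp ((1 / 2) * ∑ i, lam i * (Z i ω) ^ 2))
      = mgf (∑ i, X i) ℙ (1/2) := by
        simp only [mgf, Finset.sum_apply, hX]
    _ = ∏ i, mgf (X i) ℙ (1/2) := hXindep.mgf_sum hXmeas Finset.univ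
    _ = ∏ i, √(1 - lam i)⁻¹ := Finset.prod_congr rfl fun i _ => hmgf i
    _ ≤ ∏ i, rexp (lam i / 2 + 3 * lam i ^ 2) :=
        Finset.prod_le_prod (fun i _ => Real.sqrt_nonneg _)
          (fun i _ => sqrt_inv_le_exp (hsq i))
    _ = rexp (∑ i, (lam i / 2 + 3 * lam i ^ 2)) := (Real.exp_sum _ _).symm
    _ = rexp ((1 / 2) * ∑ i, lam i + 3 / 2) := by
        congr 1
        rw [Finset.sum_add_distrib, ← Finset.sum_div, ← Finset.mul_sum, hlam]
        ring
end
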